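/- arXiv:2111.12407 — 4 statements merged into one kernel-verified Lean document; each statement's English description precedes it below -/
import Mathlib

section
/- If φ is a strictly minimalizable measure of noncompactness on a metric space (X,d), then Δ'_{X,φ}(ε) = Δ_{X,φ}(ε) for all ε in [0, φ(B̄_X)]. -/
open Metric Set Bornology Pointwise Filter Topology

noncomputable section

/-- A measure of noncompactness on a normed space `X`. -/
def IsMNC {X : Type*} [NormedAddCommGroup X] (φ : Set X → ℝ) : Prop :=
  (∀ A : Set X, 0 ≤ φ A) ∧
  (∀ A : Set X, IsBounded A → (φ A = 0 ↔ IsCompact (closure A))) ∧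
  (∀ A : Set X, φ (closure A) = φ A) ∧
  (∀ A B : Set X, φ (A ∪ B) ≤ max (φ A) (φ B))

/-- An infinite bounded set `A` is `φ`-minimal if every infinite subset has the same measure. -/
def PhiMinimal {X : Type*} [NormedAddCommGroup X] (φ : Set X → ℝ) (A : Set X) : Prop :=
  A.Infinite ∧ IsBounded A ∧ ∀ B ⊆ A, B.Infinite → φ B = φ A

/-- The modulus of noncompact convexity `Δ_{X,φ}`. -/
def Delta {X : Type*} [NormedAddCommGroup X] [NormedSpace ℝ X] (φ : Set X → ℝ) (ε : ℝ) : ℝ :=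
  sInf {r | ∃ A : Set X, A ⊆ closedBall 0 1 ∧ ε < φ A ∧
    r = 1 - Metric.infDist 0 (convexHull ℝ A)}

/-- The new modulus `Δ'_{X,φ}`, where the infimum is over `φ`-minimal sets. -/
def Delta' {X : Type*} [NormedAddCommGroup X] [NormedSpace ℝ X] (φ : Set X → ℝ) (ε : ℝ) : ℝ :=
  sInf {r | ∃ A : Set X, A ⊆ closedBall 0 1 ∧ PhiMinimal φ A ∧ ε < φ A ∧
    r = 1 - Metric.infDist 0 (convexHull ℝ A)}

/-- `φ` is minimalizable. -/
def Minimalizable {X : Type*} [NormedAddCommGroup X] (φ : Set X → ℝ) : Prop :=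
  ∀ A : Set X, A.Infinite → IsBounded A → ∀ δ > 0,
    ∃ B ⊆ A, PhiMinimal φ B ∧ φ A - δ ≤ φ B

/-- `φ` is strictly minimalizable. -/
def StrictlyMinimalizable {X : Type*} [NormedAddCommGroup X] (φ : Set X → ℝ) : Prop :=
  ∀ A : Set X, A.Infinite → IsBounded A →
    ∃ B ⊆ A, PhiMinimal φ B ∧ φ B = φ A

/-- The Kuratowski measure of noncompactness `α`. -/
def kuratowskiMNC {X : Type*} [NormedAddCommGroup X] (A : Set X) : ℝ :=
  sInf {ε | 0 < ε ∧ ∃ S : Finset (Set X), (∀ s ∈ S, Metric.diam s ≤ ε) ∧ A ⊆ ⋃ s ∈ S, s}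

/-- The Hausdorff measure of noncompactness `χ`. -/
def hausdorffMNC {X : Type*} [NormedAddCommGroup X] (A : Set X) : ℝ :=
  sInf {ε | 0 < ε ∧ ∃ F : Finset X, A ⊆ ⋃ x ∈ F, closedBall x ε}

/-- The Istratescu (separation) measure of noncompactness `β`. -/
def istratescuMNC {X : Type*} [NormedAddCommGroup X] (A : Set X) : ℝ :=
  sSup {r | 0 < r ∧ ∃ B ⊆ A, B.Infinite ∧ ∀ x ∈ B, ∀ y ∈ B, x ≠ y → r ≤ dist x y}

/-- for a strictly minimalizable measure of noncompactness,
`Δ'_{X,φ}(ε) = Δ_{X,φ}(ε)` on `[0, φ(B̄_X)]`. -/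
theorem delta'_eq_delta_of_strictlyMinimalizable {X : Type*} [NormedAddCommGroup X]
    [NormedSpace ℝ X] (φ : Set X → ℝ) (hφ : IsMNC φ) (hs : StrictlyMinimalizable φ) :
    ∀ ε ∈ Set.Icc (0:ℝ) (φ (closedBall (0:X) 1)), Delta' φ ε = Delta φ ε := by
  intro ε hε
  obtain ⟨hε0, -⟩ := hε
  set S : Set ℝ := {r | ∃ A : Set X, A ⊆ closedBall 0 1 ∧ ε < φ A ∧
    r = 1 - Metric.infDist 0 (convexHull ℝ A)} with hSdef
  set S' : Set ℝ := {r | ∃ A : Set X, A ⊆ closedBall 0 1 ∧ PhiMinimal φ A ∧ ε < φ A ∧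
    r = 1 - Metric.infDist 0 (convexHull ℝ A)} with hS'def
  have hsub : S' ⊆ S := by rintro r ⟨A, h1, _, h3, h4⟩; exact ⟨A, h1, h3, h4⟩
  have hbd : ∀ r ∈ S, (0:ℝ) ≤ r := by
    rintro r ⟨A, hA, hφA, rfl⟩
    have hAne : A.Nonempty := by
      rcases A.eq_empty_or_nonempty with rfl | h
      · exfalso
        have := (hφ.2.1 ∅ Bornology.isBounded_empty).mpr (by simp)
        linarith
      · exact h
    obtain ⟨x, hx⟩ := hAne
    have hxh : x ∈ convexHull ℝ A := subset_convexHull ℝ A hx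
    have hchsub : convexHull ℝ A ⊆ closedBall 0 1 :=
      convexHull_min hA (convex_closedBall _ _)
    have h1 : Metric.infDist 0 (convexHull ℝ A) ≤ 1 :=
      calc Metric.infDist 0 (convexHull ℝ A) ≤ dist 0 x := Metric.infDist_le_dist_of_mem hxh
        _ ≤ 1 := by rw [dist_comm]; exact mem_closedBall.mp (hchsub hxh)
    linarith
  have key : ∀ r ∈ S, ∃ r' ∈ S', r' ≤ r := by
    rintro r ⟨A, hA, hφA, rfl⟩
    have hAbd : IsBounded A := (isBounded_closedBall).subset hA
    have hAinf : A.Infinite := by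
      by_contra h
      rw [Set.not_infinite] at h
      have := (hφ.2.1 A hAbd).mpr h.isCompact.closure
      linarith
    obtain ⟨B, hBA, hBmin, hBφ⟩ := hs A hAinf hAbd
    obtain ⟨x, hx⟩ := hBmin.1.nonempty
    have hBne : (convexHull ℝ B).Nonempty := ⟨x, subset_convexHull ℝ B hx⟩
    have hmono : Metric.infDist 0 (convexHull ℝ A) ≤ Metric.infDist 0 (convexHull ℝ B) :=
      Metric.infDist_le_infDist_of_subset (convexHull_mono hBA) hBne
    refine ⟨1 - Metric.infDist 0 (convexHull ℝ B),
      ⟨B, hBA.trans hA, hBmin, by rw [hBφ]; exact hφA, rfl⟩, by linarith⟩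
  show sInf S' = sInf S
  rcases Set.eq_empty_or_nonempty S with hS | hS
  · have hS' : S' = ∅ := Set.eq_empty_of_subset_empty (hS ▸ hsub)
    rw [hS, hS']
  · have hS' : S'.Nonempty := by
      obtain ⟨r, hr⟩ := hS
      obtain ⟨r', hr', -⟩ := key r hr
      exact ⟨r', hr'⟩
    have hbd' : BddBelow S' := ⟨0, fun r hr => hbd r (hsub hr)⟩
    apply le_antisymm
    · exact le_csInf hS fun r hr => by
        obtain ⟨r', hr', hle⟩ := key r hr
        exact (csInf_le hbd' hr').trans hle
    · exact le_csInf hS' fun r hr => csInf_le ⟨0, hbd⟩ (hsub hr)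
end
end

section
/- If φ is a minimalizable measure of noncompactness on a metric space (X,d), then Δ_{X,φ}(ε) = Δ'_{X,φ}(ε) for all ε in [0, φ(B̄_X)]. -/
open Metric Set Bornology Pointwise Filter Topology

noncomputable section

/-- for a minimalizable measure of noncompactness,
`Δ_{X,φ}(ε) = Δ'_{X,φ}(ε)` on `[0, φ(B̄_X)]`. -/
theorem delta_eq_delta'_of_minimalizable {X : Type*} [NormedAddCommGroup X]
    [NormedSpace ℝ X] (φ : Set X → ℝ) (hφ : IsMNC φ) (hm : Minimalizable φ) :
    ∀ ε ∈ Set.Icc (0:ℝ) (φ (closedBall (0:X) 1)), Delta φ ε = Delta' φ ε := by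
  rintro ε ⟨hε0, -⟩
  set S : Set ℝ := {r | ∃ A : Set X, A ⊆ closedBall 0 1 ∧ ε < φ A ∧
    r = 1 - Metric.infDist 0 (convexHull ℝ A)} with hSdef
  set S' : Set ℝ := {r | ∃ A : Set X, A ⊆ closedBall 0 1 ∧ PhiMinimal φ A ∧ ε < φ A ∧
    r = 1 - Metric.infDist 0 (convexHull ℝ A)} with hS'def
  have hsub : S' ⊆ S := by
    rintro r ⟨A, hA, _, hφA, rfl⟩
    exact ⟨A, hA, hφA, rfl⟩
  -- every element of S is nonnegative
  have hS0 : ∀ r ∈ S, (0:ℝ) ≤ r := by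
    rintro r ⟨A, hA, hφA, rfl⟩
    have hAne : A.Nonempty := by
      rcases Set.eq_empty_or_nonempty A with h | h
      · exfalso
        have hb : IsBounded A := Metric.isBounded_closedBall.subset hA
        have : φ A = 0 := by
          refine (hφ.2.1 A hb).mpr ?_
          rw [h, closure_empty]
          exact isCompact_empty
        linarith
      · exact h
    obtain ⟨y, hy⟩ := hAne
    have hyc : y ∈ convexHull ℝ A := subset_convexHull ℝ A hy
    have : Metric.infDist 0 (convexHull ℝ A) ≤ dist (0:X) y :=
      Metric.infDist_le_dist_of_mem hyc
    have hy1 : dist (0:X) y ≤ 1 := by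
      rw [dist_comm]; exact mem_closedBall.mp (hA hy)
    linarith
  have hbddS : BddBelow S := ⟨0, hS0⟩
  have hbddS' : BddBelow S' := hbddS.mono hsub
  -- the key construction
  have key : ∀ r ∈ S, ∃ r' ∈ S', r' ≤ r := by
    rintro r ⟨A, hA, hφA, rfl⟩
    have hAb : IsBounded A := Metric.isBounded_closedBall.subset hA
    have hAinf : A.Infinite := by
      by_contra hfin
      rw [Set.not_infinite] at hfin
      have : φ A = 0 := by
        refine (hφ.2.1 A hAb).mpr ?_
        rw [hfin.isClosed.closure_eq]
        exact hfin.isCompact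
      linarith
    obtain ⟨B, hBA, hBmin, hBφ⟩ := hm A hAinf hAb ((φ A - ε)/2) (by linarith)
    have hBε : ε < φ B := by linarith
    refine ⟨1 - Metric.infDist 0 (convexHull ℝ B),
      ⟨B, hBA.trans hA, hBmin, hBε, rfl⟩, ?_⟩
    have hBne : (convexHull ℝ B).Nonempty :=
      hBmin.1.nonempty.mono (subset_convexHull ℝ B)
    have : Metric.infDist 0 (convexHull ℝ A) ≤ Metric.infDist 0 (convexHull ℝ B) :=
      Metric.infDist_le_infDist_of_subset (convexHull_mono hBA) hBne
    linarith
  show sInf S = sInf S'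
  rcases Set.eq_empty_or_nonempty S with hS | hS
  · have hS' : S' = ∅ := Set.eq_empty_of_subset_empty (hS ▸ hsub)
    rw [hS, hS']
  · have hS'ne : S'.Nonempty := by
      obtain ⟨r, hr⟩ := hS
      obtain ⟨r', hr', _⟩ := key r hr
      exact ⟨r', hr'⟩
    refine le_antisymm (csInf_le_csInf hbddS hS'ne hsub) ?_
    refine le_csInf hS fun r hr => ?_
    obtain ⟨r', hr', hle⟩ := key r hr
    exact (csInf_le hbddS' hr').trans hle
end
end

section
/- If X is a separable metric space, then for the Hausdorff measure of noncompactness χ, Δ_{X,χ}(ε) = Δ'_{X,χ}(ε) for all ε in [0, χ(B_X)]. -/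
open Metric Set Bornology Pointwise Filter Topology

noncomputable section

/-!
Following Benavides: enumerate the closed balls with centres in a countable dense set and rational
radii. Starting from `A` with `χ(A) = r > 0`, shrink `A` step by step so that the `n`-th set lies
inside or outside the `n`-th ball while keeping `χ = r` (one of `A ∩ U`, `A \ U` must keep it).
A diagonal set `B` that is almost contained in every stage is `χ`-minimal: if an infinite `C ⊆ B`
had `χ(C) < r`, infinitely many points of `C` would lie in one ball of radius `< r`, so that ball
meets, hence contains, a stage of measure `r`.
-/

lemma exists_infinite_subset_forall_sdiff_finite {α : Type*} {S : ℕ → Set α} (hS : Antitone S)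
    (hinf : ∀ n, (S n).Infinite) :
    ∃ B ⊆ S 0, B.Infinite ∧ ∀ n, (B \ S n).Finite := by
  classical
  have hfresh (n : ℕ) (t : Finset α) : (S n \ t).Nonempty :=
    ((hinf n).sdiff t.finite_toSet).nonempty
  let T (n : ℕ) : Finset α :=
    Nat.rec (motive := fun _ => Finset α) ∅ (fun n t => insert (hfresh n t).some t) n
  have hT_succ (n : ℕ) : T (n + 1) = insert (hfresh n (T n)).some (T n) := rfl
  have hT_mono : Monotone T := monotone_nat_of_le_succ fun n => by
    rw [hT_succ]
    exact Finset.subset_insert _ _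
  have hT_card (n : ℕ) : (T n).card = n := by
    induction n with
    | zero => rfl
    | succ n ih => rw [hT_succ, Finset.card_insert_of_notMem (hfresh n (T n)).some_mem.2, ih]
  have hT_sub (n k : ℕ) : (T k : Set α) ⊆ (T n : Set α) ∪ S n := by
    rcases le_total k n with hkn | hnk
    · exact (Finset.coe_subset.2 (hT_mono hkn)).trans subset_union_left
    induction k, hnk using Nat.le_induction with
    | base => exact subset_union_left
    | succ k hnk ih =>
      rw [hT_succ, Finset.coe_insert]
      exact insert_subset (.inr (hS hnk (hfresh k (T k)).some_mem.1)) ih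
  refine ⟨⋃ k, T k, iUnion_subset fun k => by simpa [T] using hT_sub 0 k, fun hfin => ?_,
    fun n => (T n).finite_toSet.subset ?_⟩
  · have hle (n : ℕ) : n ≤ (⋃ k, (T k : Set α)).ncard := by
      rw [← hT_card n, ← ncard_coe_finset]
      exact ncard_le_ncard (subset_iUnion (fun k => (T k : Set α)) n) hfin
    exact (hle _).not_gt (Nat.lt_succ_self _)
  · rw [sdiff_subset_iff, union_comm]
    exact iUnion_subset (hT_sub n)

lemma exists_seq_closedBall_superset {X : Type*} [PseudoMetricSpace X]
    [TopologicalSpace.SeparableSpace X] [Nonempty X] :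
    ∃ (c : ℕ → X) (ρ : ℕ → ℝ), ∀ (x : X) (ε r : ℝ), ε < r →
      ∃ n, ε < ρ n ∧ ρ n < r ∧ closedBall x ε ⊆ closedBall (c n) (ρ n) := by
  obtain ⟨u, hu⟩ := TopologicalSpace.exists_dense_seq X
  let e : ℕ ≃ ℕ × ℚ := (Denumerable.eqv (ℕ × ℚ)).symm
  refine ⟨fun n => u (e n).1, fun n => (e n).2, fun x ε r hεr => ?_⟩
  obtain ⟨q, hεq, hqr⟩ := exists_rat_btwn hεr
  obtain ⟨i, hi⟩ := hu.exists_dist_lt x (sub_pos.2 hεq)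
  refine ⟨e.symm (i, q), ?_⟩
  simp only [Equiv.apply_symm_apply]
  exact ⟨hεq, hqr, closedBall_subset_closedBall' (by linarith)⟩

section HausdorffMNC

variable {X : Type*} [NormedAddCommGroup X] {A B : Set X}

lemma hausdorffMNC_nonneg (A : Set X) : 0 ≤ hausdorffMNC A :=
  Real.sInf_nonneg fun _ h => h.1.le

lemma hausdorffMNC_le_of_cover {c : ℝ} (hc : 0 < c) {F : Finset X}
    (hF : A ⊆ ⋃ x ∈ F, closedBall x c) : hausdorffMNC A ≤ c :=
  csInf_le ⟨0, fun _ h => h.1.le⟩ ⟨hc, F, hF⟩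

lemma hausdorffMNC_le_of_subset_closedBall {x : X} {c : ℝ} (hc : 0 < c)
    (h : A ⊆ closedBall x c) : hausdorffMNC A ≤ c :=
  hausdorffMNC_le_of_cover hc (F := {x}) (by simpa using h)

lemma exists_cover_of_hausdorffMNC_lt (hA : IsBounded A) {c : ℝ} (h : hausdorffMNC A < c) :
    ∃ F : Finset X, A ⊆ ⋃ x ∈ F, closedBall x c := by
  obtain ⟨R, hR⟩ := hA.subset_closedBall 0
  have hne : {ε | 0 < ε ∧ ∃ F : Finset X, A ⊆ ⋃ x ∈ F, closedBall x ε}.Nonempty :=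
    ⟨max R 1, lt_max_of_lt_right one_pos, {0}, by
      simpa using hR.trans (closedBall_subset_closedBall (le_max_left _ _))⟩
  obtain ⟨ε, ⟨-, F, hF⟩, hεc⟩ := exists_lt_of_csInf_lt hne h
  exact ⟨F, hF.trans (iUnion₂_mono fun x _ => closedBall_subset_closedBall hεc.le)⟩

lemma hausdorffMNC_mono (hAB : A ⊆ B) (hB : IsBounded B) :
    hausdorffMNC A ≤ hausdorffMNC B := by
  refine le_of_forall_gt_imp_ge_of_dense fun c hc => ?_
  obtain ⟨F, hF⟩ := exists_cover_of_hausdorffMNC_lt hB hc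
  exact hausdorffMNC_le_of_cover ((hausdorffMNC_nonneg B).trans_lt hc) (hAB.trans hF)

lemma Set.Finite.hausdorffMNC_eq_zero (hA : A.Finite) : hausdorffMNC A = 0 := by
  refine le_antisymm (le_of_forall_gt_imp_ge_of_dense fun c hc => ?_) (hausdorffMNC_nonneg A)
  exact hausdorffMNC_le_of_cover hc (F := hA.toFinset) fun a ha =>
    mem_biUnion (hA.mem_toFinset.2 ha) (mem_closedBall_self hc.le)

lemma hausdorffMNC_union_le (hA : IsBounded A) (hB : IsBounded B) :
    hausdorffMNC (A ∪ B) ≤ max (hausdorffMNC A) (hausdorffMNC B) := by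
  classical
  refine le_of_forall_gt_imp_ge_of_dense fun c hc => ?_
  obtain ⟨F, hF⟩ := exists_cover_of_hausdorffMNC_lt hA ((le_max_left _ _).trans_lt hc)
  obtain ⟨G, hG⟩ := exists_cover_of_hausdorffMNC_lt hB ((le_max_right _ _).trans_lt hc)
  refine hausdorffMNC_le_of_cover ((hausdorffMNC_nonneg A).trans_lt
    ((le_max_left _ _).trans_lt hc)) (F := F ∪ G) ?_
  rw [Finset.set_biUnion_union]
  exact union_subset_union hF hG

lemma hausdorffMNC_inter_eq_or_sdiff_eq (hA : IsBounded A) (U : Set X) :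
    hausdorffMNC (A ∩ U) = hausdorffMNC A ∨ hausdorffMNC (A \ U) = hausdorffMNC A := by
  have hsplit := hausdorffMNC_union_le (A := A ∩ U) (B := A \ U) (hA.subset inter_subset_left)
    (hA.subset sdiff_subset)
  rw [inter_union_sdiff] at hsplit
  rcases le_max_iff.1 hsplit with h | h
  · exact .inl (le_antisymm (hausdorffMNC_mono inter_subset_left hA) h)
  · exact .inr (le_antisymm (hausdorffMNC_mono sdiff_subset hA) h)

lemma exists_antitone_hausdorffMNC_eq_subset_or_disjoint (hA : IsBounded A) (U : ℕ → Set X) :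
    ∃ S : ℕ → Set X, Antitone S ∧ S 0 ⊆ A ∧ (∀ n, hausdorffMNC (S n) = hausdorffMNC A) ∧
      ∀ n, S n ⊆ U n ∨ Disjoint (S n) (U n) := by
  classical
  let T (n : ℕ) : Set X := Nat.rec A
    (fun n T => if hausdorffMNC (T ∩ U n) = hausdorffMNC A then T ∩ U n else T \ U n) n
  have hT_succ (n : ℕ) : T (n + 1) =
      if hausdorffMNC (T n ∩ U n) = hausdorffMNC A then T n ∩ U n else T n \ U n := rfl
  have hT_anti : Antitone T := antitone_nat_of_succ_le fun n => by
    rw [hT_succ]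
    split_ifs
    exacts [inter_subset_left, sdiff_subset]
  have hT_eq (n : ℕ) : hausdorffMNC (T n) = hausdorffMNC A := by
    induction n with
    | zero => rfl
    | succ n ih =>
      rw [hT_succ]
      split_ifs with h
      · exact h
      · have hTA : IsBounded (T n) := hA.subset (hT_anti n.zero_le)
        rw [← ih]
        exact ((hausdorffMNC_inter_eq_or_sdiff_eq hTA (U n)).resolve_left (ih ▸ h))
  refine ⟨fun n => T (n + 1), fun m n hmn => hT_anti (Nat.succ_le_succ hmn),
    hT_anti (Nat.zero_le 1), fun n => hT_eq (n + 1), fun n => ?_⟩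
  show T (n + 1) ⊆ U n ∨ Disjoint (T (n + 1)) (U n)
  rw [hT_succ]
  split_ifs
  exacts [.inl inter_subset_right, .inr disjoint_sdiff_left]

lemma le_hausdorffMNC_of_forall_sdiff_finite {c : ℕ → X} {ρ : ℕ → ℝ}
    (hcρ : ∀ (x : X) (ε r : ℝ), ε < r →
      ∃ n, ε < ρ n ∧ ρ n < r ∧ closedBall x ε ⊆ closedBall (c n) (ρ n))
    {S : ℕ → Set X}
    (hS : ∀ n, S n ⊆ closedBall (c n) (ρ n) ∨ Disjoint (S n) (closedBall (c n) (ρ n)))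
    {r : ℝ} (hSr : ∀ n, r ≤ hausdorffMNC (S n))
    {C : Set X} (hC : C.Infinite) (hCb : IsBounded C) (hCS : ∀ n, (C \ S n).Finite) :
    r ≤ hausdorffMNC C := by
  by_contra! hlt
  obtain ⟨ε, hCε, hεr⟩ := exists_between hlt
  obtain ⟨F, hF⟩ := exists_cover_of_hausdorffMNC_lt hCb hCε
  obtain ⟨x, -, hx⟩ : ∃ x ∈ F, (C ∩ closedBall x ε).Infinite := by
    by_contra! hfin
    refine hC ((F.finite_toSet.biUnion fun x hx => hfin x hx).subset fun y hy => ?_)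
    obtain ⟨x, hxF, hyx⟩ := mem_iUnion₂.1 (hF hy)
    exact mem_iUnion₂.2 ⟨x, hxF, hy, hyx⟩
  obtain ⟨n, hερ, hρr, hball⟩ := hcρ x ε r hεr
  obtain ⟨y, ⟨hyC, hyx⟩, hy_almost⟩ := (hx.sdiff (hCS n)).nonempty
  have hyS : y ∈ S n := by_contra fun h => hy_almost ⟨hyC, h⟩
  rcases hS n with hsub | hdisj
  · have := hausdorffMNC_le_of_subset_closedBall
      ((hausdorffMNC_nonneg C).trans_lt (hCε.trans hερ)) hsub
    linarith [hSr n]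
  · exact hdisj.ne_of_mem hyS (hball hyx) rfl

end HausdorffMNC

theorem strictlyMinimalizable_hausdorffMNC {X : Type*} [NormedAddCommGroup X]
    [TopologicalSpace.SeparableSpace X] :
    StrictlyMinimalizable (fun A : Set X => hausdorffMNC A) := by
  intro A hA hAb
  have hle {C : Set X} (hCA : C ⊆ A) : hausdorffMNC C ≤ hausdorffMNC A :=
    hausdorffMNC_mono hCA hAb
  rcases (hausdorffMNC_nonneg A).eq_or_lt with hzero | hpos
  · refine ⟨A, subset_rfl, ⟨hA, hAb, fun C hCA _ => ?_⟩, rfl⟩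
    exact le_antisymm (hle hCA) (hzero.symm.trans_le (hausdorffMNC_nonneg C))
  obtain ⟨c, ρ, hcρ⟩ := exists_seq_closedBall_superset (X := X)
  obtain ⟨S, hS_anti, hS_sub, hS_eq, hS_sep⟩ :=
    exists_antitone_hausdorffMNC_eq_subset_or_disjoint hAb fun n => closedBall (c n) (ρ n)
  have hS_inf (n : ℕ) : (S n).Infinite := fun hfin =>
    hpos.ne (hS_eq n ▸ hfin.hausdorffMNC_eq_zero).symm
  obtain ⟨B, hBS, hB, hBS_fin⟩ := exists_infinite_subset_forall_sdiff_finite hS_anti hS_inf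
  have hBA : B ⊆ A := hBS.trans hS_sub
  have hmin {C : Set X} (hCB : C ⊆ B) (hC : C.Infinite) : hausdorffMNC C = hausdorffMNC A :=
    le_antisymm (hle (hCB.trans hBA)) <|
      le_hausdorffMNC_of_forall_sdiff_finite hcρ hS_sep (fun n => (hS_eq n).ge) hC
        (hAb.subset (hCB.trans hBA)) fun n => (hBS_fin n).subset (sdiff_subset_sdiff_left hCB)
  have hBχ : hausdorffMNC B = hausdorffMNC A := hmin subset_rfl hB
  exact ⟨B, hBA, ⟨hB, hAb.subset hBA, fun C hCB hC => (hmin hCB hC).trans hBχ.symm⟩, hBχ⟩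

theorem Delta_eq_Delta'_of_strictlyMinimalizable {X : Type*} [NormedAddCommGroup X]
    [NormedSpace ℝ X] {φ : Set X → ℝ} (hφ : StrictlyMinimalizable φ)
    (hφ_finite : ∀ A : Set X, A.Finite → φ A = 0) {ε : ℝ} (hε : 0 ≤ ε) :
    Delta φ ε = Delta' φ ε := by
  refine csInf_eq_csInf_of_forall_exists_le ?_
    fun r ⟨A, hA1, _, hεA, hr⟩ => ⟨r, ⟨A, hA1, hεA, hr⟩, le_rfl⟩
  rintro r ⟨A, hA1, hεA, rfl⟩
  have hA : A.Infinite := fun hfin => hεA.not_ge (hφ_finite A hfin ▸ hε)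
  obtain ⟨B, hBA, hBmin, hφB⟩ := hφ A hA (isBounded_closedBall.subset hA1)
  refine ⟨_, ⟨B, hBA.trans hA1, hBmin, hφB ▸ hεA, rfl⟩, ?_⟩
  have hB : (convexHull ℝ B).Nonempty := hBmin.1.nonempty.convexHull
  linarith [infDist_le_infDist_of_subset (x := (0 : X)) (convexHull_mono hBA) hB]

/-- in a separable (metric) space, `Δ_{X,χ}(ε) = Δ'_{X,χ}(ε)`. -/
theorem delta_eq_delta'_hausdorff_of_separable {X : Type*} [NormedAddCommGroup X]
    [NormedSpace ℝ X] [TopologicalSpace.SeparableSpace X] :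
    ∀ ε ∈ Set.Icc (0:ℝ) (hausdorffMNC (closedBall (0:X) 1)),
      Delta (fun A : Set X => hausdorffMNC A) ε = Delta' (fun A : Set X => hausdorffMNC A) ε := by
  rintro ε ⟨hε, -⟩
  exact Delta_eq_Delta'_of_strictlyMinimalizable strictlyMinimalizable_hausdorffMNC
    (fun _ hA => hA.hausdorffMNC_eq_zero) hε
end
end

section
/- Let (X,d) be a metric space and φ a minimalizable measure of noncompactness on X. Then the modulus Δ'_{X,φ}(ε) is continuous from the right at every ε₀ ∈ [0, φ(B̄_X)): lim_{ε→ε₀⁺} Δ'_{X,φ}(ε) = Δ'_{X,φ}(ε₀). -/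
open Metric Set Bornology Pointwise Filter Topology

noncomputable section

/-- for a minimalizable measure of noncompactness `φ`, the modulus
`Δ'_{X,φ}` is continuous from the right at every `ε₀ ∈ [0, φ(B̄_X))`. -/
theorem delta'_right_continuous {X : Type*} [NormedAddCommGroup X] [NormedSpace ℝ X]
    (φ : Set X → ℝ) (hφ : IsMNC φ) (hm : Minimalizable φ) :
    ∀ ε₀ ∈ Set.Ico (0:ℝ) (φ (closedBall (0:X) 1)),
      Tendsto (Delta' φ) (nhdsWithin ε₀ (Set.Ioi ε₀)) (nhds (Delta' φ ε₀)) := by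
  intro ε₀ hε₀
  obtain ⟨hε₀0, hε₀lt⟩ := hε₀
  set S : ℝ → Set ℝ := fun ε => {r | ∃ A : Set X, A ⊆ closedBall 0 1 ∧ PhiMinimal φ A ∧
    ε < φ A ∧ r = 1 - Metric.infDist 0 (convexHull ℝ A)} with hS
  have hDelta : ∀ ε, Delta' φ ε = sInf (S ε) := fun ε => rfl
  -- the closed unit ball is infinite
  have hball : (closedBall (0:X) 1).Infinite := by
    by_contra h
    rw [Set.not_infinite] at h
    have hc : IsCompact (closure (closedBall (0:X) 1)) := by
      rw [h.isClosed.closure_eq]; exact h.isCompact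
    have := (hφ.2.1 _ isBounded_closedBall).2 hc
    linarith
  -- lower bound
  have hlb : ∀ ε : ℝ, ∀ r ∈ S ε, (0:ℝ) ≤ r := by
    rintro ε r ⟨A, hA, hmin, -, rfl⟩
    obtain ⟨x, hx⟩ := hmin.1.nonempty
    have hxm : x ∈ convexHull ℝ A := subset_convexHull ℝ A hx
    have h1 : Metric.infDist 0 (convexHull ℝ A) ≤ dist (0:X) x :=
      Metric.infDist_le_dist_of_mem hxm
    have h2 : dist (0:X) x ≤ 1 := by rw [dist_comm]; exact mem_closedBall.mp (hA hx)
    linarith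
  have hbdd : ∀ ε : ℝ, BddBelow (S ε) := fun ε => ⟨0, hlb ε⟩
  -- nonemptiness at ε₀
  have hne : (S ε₀).Nonempty := by
    have hδ : (0:ℝ) < (φ (closedBall (0:X) 1) - ε₀) / 2 := by linarith
    obtain ⟨B, hB, hBmin, hφB⟩ := hm _ hball isBounded_closedBall _ hδ
    exact ⟨1 - Metric.infDist 0 (convexHull ℝ B), B, hB, hBmin, by linarith, rfl⟩
  rw [Metric.tendsto_nhds]
  intro η hη
  obtain ⟨r, hrS, hrlt⟩ := Real.lt_sInf_add_pos hne hη
  rw [← hDelta] at hrlt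
  obtain ⟨A, hA, hAmin, hAε₀, hrA⟩ := hrS
  have hmem : Ioo ε₀ (φ A) ∈ nhdsWithin ε₀ (Set.Ioi ε₀) := Ioo_mem_nhdsGT_of_mem ⟨le_refl _, hAε₀⟩
  filter_upwards [hmem] with ε hε
  have hrSε : r ∈ S ε := ⟨A, hA, hAmin, hε.2, hrA⟩
  have h1 : Delta' φ ε ≤ r := by rw [hDelta]; exact csInf_le (hbdd ε) hrSε
  have h2 : Delta' φ ε₀ ≤ Delta' φ ε := by
    rw [hDelta, hDelta]
    refine csInf_le_csInf (hbdd ε₀) ⟨r, hrSε⟩ ?_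
    rintro s ⟨C, hC, hCmin, hCε, hs⟩
    exact ⟨C, hC, hCmin, lt_trans hε.1 hCε, hs⟩
  rw [Real.dist_eq, abs_lt]
  constructor <;> [linarith [hrlt, h1]; linarith [hrlt, h1]]
end
end
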